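/- arXiv:1107.5066 — 2 statements merged into one kernel-verified Lean document; each statement's English description precedes it below -/
import Mathlib

section
/- Fix u ∈ [0,1] and n ≥ 2. If for each j = 1, …, n−1 the function t ↦ N_n(j,t) − N_n(j+1,t) is non-decreasing on [0,∞), then t ↦ K(n,t) is non-increasing on [0,∞), i.e., property [A] holds for this n. -/
open Real MeasureTheory Filter Topology

/-- Auxiliary history-based recursion: `Nhist a u n m t` equals `N(m,t)` when `m ≤ n`. -/
noncomputable def Nhist (a : ℕ → ℝ) (u : ℝ) : ℕ → ℕ → ℝ → ℝ
  | 0, _, _ => 0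
  | n + 1, m, t =>
      if m ≤ n then Nhist a u n m t
      else (Finset.Icc 1 (n + 1)).sup'
          (Finset.nonempty_Icc.mpr (Nat.succ_le_succ (Nat.zero_le n)))
          (fun j => a j + (a j * (1 - u) + u) *
            (Real.exp (-t) * ∫ x in (0:ℝ)..t, Nhist a u n (n + 1 - j) x * Real.exp x))

/-- `Nval a u n t` is `N(n,t)`, the optimal expected number of enemy planes shot down,
with `N(0,t) = 0` and `N(n,t) = max_{1 ≤ j ≤ n} N_n(j,t)`. -/
noncomputable def Nval (a : ℕ → ℝ) (u : ℝ) (n : ℕ) (t : ℝ) : ℝ :=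
  Nhist a u n n t

/-- `Nstar a u r t` is `N*(r,t) = e^{-t} ∫_0^t N(r,x) e^x dx` (so `N*(0,t) = 0`). -/
noncomputable def Nstar (a : ℕ → ℝ) (u : ℝ) (r : ℕ) (t : ℝ) : ℝ :=
  Real.exp (-t) * ∫ x in (0:ℝ)..t, Nval a u r x * Real.exp x

/-- `Nalloc a u n j t` is `N_n(j,t) = a(j) + c(j)·N*(n-j,t)` where `c(j) = a(j)(1-u)+u`. -/
noncomputable def Nalloc (a : ℕ → ℝ) (u : ℝ) (n j : ℕ) (t : ℝ) : ℝ :=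
  a j + (a j * (1 - u) + u) * Nstar a u (n - j) t

/-- `Kopt a u n t = min { j ∈ {1,…,n} : N_n(j,t) = N(n,t) }`. -/
noncomputable def Kopt (a : ℕ → ℝ) (u : ℝ) (n : ℕ) (t : ℝ) : ℕ :=
  sInf {j : ℕ | 1 ≤ j ∧ j ≤ n ∧ Nalloc a u n j t = Nval a u n t}

lemma Nhist_of_le (a : ℕ → ℝ) (u : ℝ) :
    ∀ n m : ℕ, m ≤ n → ∀ t : ℝ, Nhist a u n m t = Nhist a u m m t := by
  intro n
  induction n with
  | zero => intro m hm t; interval_cases m; rfl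
  | succ n ih =>
    intro m hm t
    rcases eq_or_lt_of_le hm with h | h
    · rw [h]
    · have hmn : m ≤ n := Nat.lt_succ_iff.mp h
      rw [Nhist, if_pos hmn, ih m hmn t]

lemma Nval_sup (a : ℕ → ℝ) (u : ℝ) (m : ℕ) (t : ℝ) :
    Nval a u (m + 1) t = (Finset.Icc 1 (m + 1)).sup'
      (Finset.nonempty_Icc.mpr (Nat.succ_le_succ (Nat.zero_le m)))
      (fun j => Nalloc a u (m + 1) j t) := by
  show Nhist a u (m + 1) (m + 1) t = _
  rw [Nhist, if_neg (by omega)]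
  apply Finset.sup'_congr _ rfl
  intro j hj
  simp only [Finset.mem_Icc] at hj
  have hle : m + 1 - j ≤ m := by omega
  have hfun : (fun x => Nhist a u m (m + 1 - j) x * Real.exp x)
      = fun x => Nval a u (m + 1 - j) x * Real.exp x := by
    funext x; rw [Nhist_of_le a u m (m + 1 - j) hle x]; rfl
  simp only [Nalloc, Nstar, hfun]

lemma Nalloc_le_Nval (a : ℕ → ℝ) (u : ℝ) (n j : ℕ) (hj1 : 1 ≤ j) (hjn : j ≤ n) (t : ℝ) :
    Nalloc a u n j t ≤ Nval a u n t := by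
  obtain ⟨m, rfl⟩ := Nat.exists_eq_succ_of_ne_zero (by omega : n ≠ 0)
  rw [Nval_sup]
  exact Finset.le_sup' (fun j => Nalloc a u (m + 1) j t) (Finset.mem_Icc.mpr ⟨hj1, hjn⟩)

lemma Kopt_mem (a : ℕ → ℝ) (u : ℝ) (n : ℕ) (hn : 1 ≤ n) (t : ℝ) :
    1 ≤ Kopt a u n t ∧ Kopt a u n t ≤ n ∧
      Nalloc a u n (Kopt a u n t) t = Nval a u n t := by
  have hne : {j : ℕ | 1 ≤ j ∧ j ≤ n ∧ Nalloc a u n j t = Nval a u n t}.Nonempty := by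
    obtain ⟨m, rfl⟩ := Nat.exists_eq_succ_of_ne_zero (by omega : n ≠ 0)
    obtain ⟨j, hj, hje⟩ := Finset.exists_mem_eq_sup' (Finset.nonempty_Icc.mpr
      (Nat.succ_le_succ (Nat.zero_le m))) (fun j => Nalloc a u (m + 1) j t)
    simp only [Finset.mem_Icc] at hj
    exact ⟨j, hj.1, hj.2, by rw [Nval_sup]; exact hje.symm⟩
  exact Nat.sInf_mem hne

/-- Lemma 4.1: if `t ↦ N_n(j,t) - N_n(j+1,t)` is non-decreasing on `[0,∞)` for each
`j = 1,…,n-1`, then `t ↦ K(n,t)` is non-increasing on `[0,∞)`. -/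
theorem fighter_A_criterion
    (a : ℕ → ℝ) (haI : ∀ j, a j ∈ Set.Icc (0:ℝ) 1) (ha0 : a 0 = 0)
    (hmono : StrictMono a)
    (hconc : ∀ j : ℕ, a (j + 2) - a (j + 1) < a (j + 1) - a j)
    (u : ℝ) (hu : u ∈ Set.Icc (0:ℝ) 1) (n : ℕ) (hn : 2 ≤ n)
    (hyp : ∀ j : ℕ, 1 ≤ j → j + 1 ≤ n →
      MonotoneOn (fun t => Nalloc a u n j t - Nalloc a u n (j + 1) t) (Set.Ici (0:ℝ))) :
    AntitoneOn (fun t => Kopt a u n t) (Set.Ici (0:ℝ)) := by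
  -- telescoping monotonicity of differences
  have hdiff : ∀ k l : ℕ, 1 ≤ k → k ≤ l → l ≤ n →
      MonotoneOn (fun t => Nalloc a u n k t - Nalloc a u n l t) (Set.Ici (0:ℝ)) := by
    intro k l hk hkl hln
    induction l, hkl using Nat.le_induction with
    | base => simpa using monotoneOn_const (c := (0:ℝ)) (s := Set.Ici (0:ℝ))
    | succ l hkl ih =>
      have h1 : MonotoneOn (fun t => Nalloc a u n k t - Nalloc a u n l t) (Set.Ici (0:ℝ)) :=
        ih (by omega)
      have h2 := hyp l (hk.trans hkl) hln
      have := h1.add h2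
      simpa using this
  intro s hs t ht hst
  simp only
  obtain ⟨hk1, hkn, hks⟩ := Kopt_mem a u n (by omega) s
  obtain ⟨hl1, hln, hlt⟩ := Kopt_mem a u n (by omega) t
  set k := Kopt a u n s
  set l := Kopt a u n t
  by_contra hcon
  push_neg at hcon
  have hkl : k < l := hcon
  -- at time s, k is a maximizer, so Nalloc k s ≥ Nalloc l s
  have h0 : 0 ≤ Nalloc a u n k s - Nalloc a u n l s := by
    have := Nalloc_le_Nval a u n l hl1 (by omega) s
    rw [← hks] at this; linarith
  have hmonokl := hdiff k l hk1 hkl.le hln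
  have h1 : 0 ≤ Nalloc a u n k t - Nalloc a u n l t :=
    h0.trans (hmonokl hs ht hst)
  have h2 : Nalloc a u n k t ≤ Nval a u n t := Nalloc_le_Nval a u n k hk1 (by omega) t
  have h3 : Nalloc a u n k t = Nval a u n t := le_antisymm h2 (by rw [← hlt]; linarith)
  have : l ≤ k := Nat.sInf_le ⟨hk1, by omega, h3⟩
  omega
end

section
/- Property [A] holds for the Invincible Fighter: for u = 1 and every fixed n ≥ 1, the function t ↦ K(n,t) is non-increasing on [0,∞). -/
open Real MeasureTheory Filter Topology

/-! For `u = 1` the value `N(n,t)` is the max-plus convolution `max_j (a j + N*(n - j, t))`.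
Such a convolution of a concave sequence with a concave sequence is again concave, so an
induction on `n` shows that `n ↦ N(n,t)` is nondecreasing and concave for every `t ≥ 0`.
Since `N*` solves `∂ₜN* = N - N*`, the concavity of `N(·,t)` gives
`∂ₜ(N*(m+1) - N*(m)) = (N(m+1) - N(m)) - (N*(m+1) - N*(m)) ≥ 0`, so for `p ≤ q` the gap
`N*(q,t) - N*(p,t)` is nondecreasing in `t`. Hence `N_n(k,t) - N_n(k',t)` is nondecreasing in `t`
whenever `k ≤ k'`: once a smaller allocation is optimal it stays at least as good, and the
least optimal allocation can only decrease. -/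

open Set

theorem antitoneOn_Iic_of_succ_le {α : Type*} [Preorder α] {f : ℕ → α} {n : ℕ}
    (hf : ∀ i < n, f (i + 1) ≤ f i) : AntitoneOn f (Iic n) := by
  intro p _ q hq hpq
  induction q, hpq using Nat.le_induction with
  | base => rfl
  | succ q _ ih => exact (hf q hq).trans (ih (Nat.le_of_succ_le hq))

theorem antitoneOn_sInf_argmax {α : Type*} [Preorder α] {f : ℕ → α → ℝ} {M : α → ℝ} {S : Set ℕ}
    {s : Set α}
    (hM : ∀ t ∈ s, IsGreatest ((f · t) '' S) (M t))
    (hf : ∀ k ∈ S, ∀ k' ∈ S, k ≤ k' → MonotoneOn (fun t => f k t - f k' t) s) :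
    AntitoneOn (fun t => sInf {j | j ∈ S ∧ f j t = M t}) s := by
  have hmem : ∀ t ∈ s, sInf {j | j ∈ S ∧ f j t = M t} ∈ {j | j ∈ S ∧ f j t = M t} := by
    intro t ht
    obtain ⟨j, hj, hjt⟩ := (hM t ht).1
    exact Nat.sInf_mem ⟨j, hj, hjt⟩
  intro t₁ ht₁ t₂ ht₂ ht
  obtain ⟨hK₁S, hK₁⟩ := hmem t₁ ht₁
  obtain ⟨hK₂S, hK₂⟩ := hmem t₂ ht₂
  by_contra! hlt
  have hgap₁ : f (sInf {j | j ∈ S ∧ f j t₂ = M t₂}) t₁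
      ≤ f (sInf {j | j ∈ S ∧ f j t₁ = M t₁}) t₁ :=
    ((hM t₁ ht₁).2 ⟨_, hK₂S, rfl⟩).trans_eq hK₁.symm
  have hgap₂ := hf _ hK₁S _ hK₂S hlt.le ht₁ ht₂ ht
  have hopt : f (sInf {j | j ∈ S ∧ f j t₁ = M t₁}) t₂ = M t₂ :=
    le_antisymm ((hM t₂ ht₂).2 ⟨_, hK₁S, rfl⟩) (by simp only at hgap₂; linarith)
  exact hlt.not_ge (Nat.sInf_le ⟨hK₁S, hopt⟩)

def IsMaxConv (a g F : ℕ → ℝ) : Prop :=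
  ∀ m, 1 ≤ m → IsGreatest ((fun j => a j + g (m - j)) '' Icc 1 m) (F m)

namespace IsMaxConv

variable {a g F : ℕ → ℝ}

theorem le (hF : IsMaxConv a g F) {j m : ℕ} (hj : 1 ≤ j) (hjm : j ≤ m) :
    a j + g (m - j) ≤ F m :=
  (hF m (hj.trans hjm)).2 ⟨j, ⟨hj, hjm⟩, rfl⟩

theorem exists_eq (hF : IsMaxConv a g F) {m : ℕ} (hm : 1 ≤ m) :
    ∃ j, 1 ≤ j ∧ j ≤ m ∧ a j + g (m - j) = F m := by
  obtain ⟨j, ⟨hj, hjm⟩, hjF⟩ := (hF m hm).1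
  exact ⟨j, hj, hjm, hjF⟩

theorem le_succ (hF : IsMaxConv a g F) {m : ℕ} (hm : 1 ≤ m) (hg : ∀ i < m, g i ≤ g (i + 1)) :
    F m ≤ F (m + 1) := by
  obtain ⟨j, hj, hjm, hjF⟩ := hF.exists_eq hm
  have hle := hF.le (m := m + 1) hj (by omega)
  rw [Nat.sub_add_comm hjm] at hle
  linarith [hg (m - j) (by omega)]

theorem sub_le_sub (hF : IsMaxConv a g F) {m : ℕ} (hm : 1 ≤ m)
    (hg : AntitoneOn (fun i => g (i + 1) - g i) (Iic m)) :
    g (m + 1) - g m ≤ F (m + 1) - F m := by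
  obtain ⟨j, hj, hjm, hjF⟩ := hF.exists_eq hm
  have hle := hF.le (m := m + 1) hj (by omega)
  rw [Nat.sub_add_comm hjm] at hle
  have hgj := hg (mem_Iic.2 (Nat.sub_le m j)) (mem_Iic.2 le_rfl) (Nat.sub_le m j)
  simp only at hgj
  linarith

theorem succ_sub_le_sub (hF : IsMaxConv a g F) {k : ℕ} (hk : 1 ≤ k)
    (ha : Antitone fun j => a (j + 1) - a j)
    (hg : AntitoneOn (fun i => g (i + 1) - g i) (Iic k)) :
    F (k + 2) - F (k + 1) ≤ F (k + 1) - F k := by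
  obtain ⟨j, hj, hjk, hjF⟩ := hF.exists_eq (m := k + 2) (by omega)
  obtain ⟨i, hi, hik, hiF⟩ := hF.exists_eq hk
  rcases lt_or_ge i j with hij | hji
  · -- shift one unit of allocation from `j` to `i`
    have h₁ := hF.le (j := j - 1) (m := k + 1) (by omega) (by omega)
    have h₂ := hF.le (j := i + 1) (m := k + 1) (by omega) (by omega)
    have ha' := ha (show i ≤ j - 1 by omega)
    simp only at ha'
    rw [Nat.sub_add_cancel hj] at ha'
    rw [show k + 1 - (j - 1) = k + 2 - j by omega] at h₁
    rw [show k + 1 - (i + 1) = k - i by omega] at h₂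
    linarith
  · have h₁ := hF.le (m := k + 1) hj (by omega)
    have h₂ := hF.le (m := k + 1) hi (by omega)
    have hg' := hg (a := k - i) (b := k + 1 - j) (mem_Iic.2 (by omega)) (mem_Iic.2 (by omega))
      (by omega)
    simp only at hg'
    rw [show k + 1 - j + 1 = k + 2 - j by omega, show k - i + 1 = k + 1 - i by omega] at hg'
    linarith

end IsMaxConv

noncomputable def expAvg (f : ℝ → ℝ) (t : ℝ) : ℝ :=
  exp (-t) * ∫ x in (0 : ℝ)..t, f x * exp x

section ExpAvg

variable {f g : ℝ → ℝ}

theorem hasDerivAt_expAvg (hf : Continuous f) (t : ℝ) :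
    HasDerivAt (expAvg f) (f t - expAvg f t) t := by
  have hfe : Continuous fun x => f x * exp x := hf.mul continuous_exp
  have hint : HasDerivAt (fun s => ∫ x in (0 : ℝ)..s, f x * exp x) (f t * exp t) t :=
    intervalIntegral.integral_hasDerivAt_right (hfe.intervalIntegrable 0 t)
      (hfe.stronglyMeasurableAtFilter _ _) hfe.continuousAt
  have hexp : HasDerivAt (fun s => exp (-s)) (-exp (-t)) t := by
    simpa using (hasDerivAt_neg t).exp
  refine (hexp.mul hint).congr_deriv ?_
  rw [expAvg, exp_neg]
  field_simp
  ring

theorem continuous_expAvg (hf : Continuous f) : Continuous (expAvg f) :=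
  continuous_iff_continuousAt.2 fun t => (hasDerivAt_expAvg hf t).continuousAt

theorem expAvg_sub (hf : Continuous f) (hg : Continuous g) (t : ℝ) :
    expAvg (fun x => f x - g x) t = expAvg f t - expAvg g t := by
  have hfi : IntervalIntegrable (fun x => f x * exp x) volume 0 t :=
    (hf.mul continuous_exp).intervalIntegrable 0 t
  have hgi : IntervalIntegrable (fun x => g x * exp x) volume 0 t :=
    (hg.mul continuous_exp).intervalIntegrable 0 t
  simp only [expAvg, sub_mul]
  rw [intervalIntegral.integral_sub hfi hgi]
  ring

theorem expAvg_nonneg {t : ℝ} (ht : 0 ≤ t) (hf : ∀ x ∈ Icc 0 t, 0 ≤ f x) : 0 ≤ expAvg f t :=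
  mul_nonneg (exp_pos _).le
    (intervalIntegral.integral_nonneg ht fun x hx => mul_nonneg (hf x hx) (exp_pos x).le)

theorem expAvg_le_expAvg {t : ℝ} (ht : 0 ≤ t) (hf : Continuous f) (hg : Continuous g)
    (h : ∀ x ∈ Icc 0 t, f x ≤ g x) : expAvg f t ≤ expAvg g t := by
  rw [← sub_nonneg, ← expAvg_sub hg hf]
  exact expAvg_nonneg ht fun x hx => sub_nonneg.2 (h x hx)

theorem expAvg_const (c t : ℝ) : expAvg (fun _ => c) t = c * (1 - exp (-t)) := by
  rw [expAvg, intervalIntegral.integral_const_mul, integral_exp, exp_zero, exp_neg]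
  field_simp

end ExpAvg

section Recursion

variable {a : ℕ → ℝ} {u : ℝ}

theorem nhist_eq_of_le {n m : ℕ} (h : m ≤ n) : Nhist a u n m = Nhist a u m m := by
  induction n with
  | zero => rw [Nat.le_zero.1 h]
  | succ n ih =>
    rcases h.lt_or_eq with h | rfl
    · funext t
      rw [Nhist, if_pos (by omega)]
      exact congrFun (ih (by omega)) t
    · rfl

theorem nstar_eq_expAvg (r : ℕ) : Nstar a u r = expAvg (Nval a u r) := rfl

theorem nval_zero (t : ℝ) : Nval a u 0 t = 0 := rfl

theorem nstar_zero (t : ℝ) : Nstar a u 0 t = 0 := by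
  simp [Nstar, nval_zero]

theorem nval_succ (n : ℕ) (t : ℝ) :
    Nval a u (n + 1) t = (Finset.Icc 1 (n + 1)).sup' (Finset.nonempty_Icc.2 (by omega))
      (fun j => Nalloc a u (n + 1) j t) := by
  show Nhist a u (n + 1) (n + 1) t = _
  rw [Nhist, if_neg (by omega)]
  refine Finset.sup'_congr _ rfl fun j hj => ?_
  rw [nhist_eq_of_le (by have := (Finset.mem_Icc.1 hj).1; omega : n + 1 - j ≤ n)]
  rfl

theorem continuous_nval (n : ℕ) : Continuous (Nval a u n) := by
  induction n using Nat.strong_induction_on with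
  | _ n ih =>
    rcases n with _ | n
    · exact continuous_const.congr fun t => (nval_zero t).symm
    · refine (Continuous.finset_sup'_apply _ fun j hj => ?_).congr fun t => (nval_succ n t).symm
      have hj := (Finset.mem_Icc.1 hj).1
      exact continuous_const.add (continuous_const.mul (continuous_expAvg (ih _ (by omega))))

theorem hasDerivAt_nstar (r : ℕ) (t : ℝ) :
    HasDerivAt (Nstar a u r) (Nval a u r t - Nstar a u r t) t :=
  hasDerivAt_expAvg (continuous_nval r) t

theorem continuous_nstar (r : ℕ) : Continuous (Nstar a u r) :=
  continuous_expAvg (continuous_nval r)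

theorem isGreatest_nval {n : ℕ} (hn : 1 ≤ n) (t : ℝ) :
    IsGreatest ((Nalloc a u n · t) '' Icc 1 n) (Nval a u n t) := by
  obtain ⟨n, rfl⟩ := Nat.exists_eq_add_of_le' hn
  rw [nval_succ]
  refine ⟨?_, ?_⟩
  · obtain ⟨j, hj, hjmax⟩ := Finset.exists_mem_eq_sup' (Finset.nonempty_Icc.2 (by omega))
      (fun j => Nalloc a u (n + 1) j t)
    exact ⟨j, Finset.mem_Icc.1 hj, hjmax.symm⟩
  · rintro _ ⟨j, hj, rfl⟩
    exact Finset.le_sup' (fun j => Nalloc a u (n + 1) j t) (Finset.mem_Icc.2 hj)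

theorem nval_one (t : ℝ) : Nval a u 1 t = a 1 := by
  obtain ⟨j, hj, hjt⟩ := (isGreatest_nval le_rfl t).1
  obtain rfl : j = 1 := le_antisymm hj.2 hj.1
  rw [← hjt]
  simp only [Nalloc, Nat.sub_self, nstar_zero, mul_zero, add_zero]

theorem nstar_one_le (ha1 : 0 ≤ a 1) (t : ℝ) : Nstar a u 1 t ≤ a 1 := by
  rw [nstar_eq_expAvg, show Nval a u 1 = fun _ => a 1 from funext nval_one, expAvg_const]
  exact mul_le_of_le_one_right ha1 (by linarith [exp_pos (-t)])

theorem nstar_sub_nstar (p q : ℕ) (t : ℝ) :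
    Nstar a u q t - Nstar a u p t = expAvg (fun x => Nval a u q x - Nval a u p x) t :=
  (expAvg_sub (continuous_nval q) (continuous_nval p) t).symm

theorem nstar_le_nstar {p q : ℕ} {t : ℝ} (ht : 0 ≤ t)
    (h : ∀ x ∈ Icc 0 t, Nval a u p x ≤ Nval a u q x) : Nstar a u p t ≤ Nstar a u q t :=
  expAvg_le_expAvg ht (continuous_nval p) (continuous_nval q) h

theorem nstar_succ_succ_sub_le {k : ℕ} {t : ℝ} (ht : 0 ≤ t)
    (h : ∀ x ∈ Icc 0 t,
      Nval a u (k + 2) x - Nval a u (k + 1) x ≤ Nval a u (k + 1) x - Nval a u k x) :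
    Nstar a u (k + 2) t - Nstar a u (k + 1) t ≤ Nstar a u (k + 1) t - Nstar a u k t := by
  rw [nstar_sub_nstar, nstar_sub_nstar]
  exact expAvg_le_expAvg ht ((continuous_nval _).sub (continuous_nval _))
    ((continuous_nval _).sub (continuous_nval _)) h

end Recursion

section InvincibleFighter

variable {a : ℕ → ℝ}

theorem nalloc_one (n j : ℕ) (t : ℝ) : Nalloc a 1 n j t = a j + Nstar a 1 (n - j) t := by
  simp [Nalloc]

theorem isMaxConv_nval (t : ℝ) :
    IsMaxConv a (fun r => Nstar a 1 r t) (fun n => Nval a 1 n t) := fun _ hm => by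
  simpa only [nalloc_one] using isGreatest_nval (a := a) (u := 1) hm t

theorem nval_two_le (ha0 : a 0 = 0) (ha1 : 0 ≤ a 1) (ha : Antitone fun j => a (j + 1) - a j)
    (t : ℝ) : Nval a 1 2 t ≤ 2 * a 1 := by
  obtain ⟨j, hj, hj2, hjt⟩ := (isMaxConv_nval (a := a) t).exists_eq (m := 2) (by omega)
  rw [← hjt]
  interval_cases j
  · linarith [nstar_one_le (u := 1) ha1 t]
  · have := ha (zero_le_one' ℕ)
    simp only [zero_add, ha0, sub_zero] at this
    simp only [Nat.sub_self, nstar_zero]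
    linarith

theorem nval_succ_sub_nonneg_and_le (ha0 : a 0 = 0) (ha1 : 0 ≤ a 1)
    (ha : Antitone fun j => a (j + 1) - a j) (n : ℕ) :
    ∀ t, 0 ≤ t → 0 ≤ Nval a 1 (n + 1) t - Nval a 1 n t ∧
      Nval a 1 (n + 2) t - Nval a 1 (n + 1) t ≤ Nval a 1 (n + 1) t - Nval a 1 n t := by
  induction n using Nat.strong_induction_on with
  | _ n ih =>
    intro t ht
    rcases Nat.eq_zero_or_pos n with rfl | hn
    · have := nval_two_le ha0 ha1 ha t
      simp only [zero_add, nval_one, nval_zero, sub_zero]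
      constructor <;> linarith
    have hg_mono : ∀ i < n, Nstar a 1 i t ≤ Nstar a 1 (i + 1) t := fun i hi =>
      nstar_le_nstar ht fun x hx => sub_nonneg.1 (ih i hi x hx.1).1
    have hg_conc : AntitoneOn (fun i => Nstar a 1 (i + 1) t - Nstar a 1 i t) (Iic n) :=
      antitoneOn_Iic_of_succ_le fun i hi => nstar_succ_succ_sub_le ht fun x hx => (ih i hi x hx.1).2
    exact ⟨sub_nonneg.2 ((isMaxConv_nval t).le_succ hn hg_mono),
      (isMaxConv_nval t).succ_sub_le_sub hn ha hg_conc⟩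

theorem antitone_nstar_succ_sub (ha0 : a 0 = 0) (ha1 : 0 ≤ a 1)
    (ha : Antitone fun j => a (j + 1) - a j) {t : ℝ} (ht : 0 ≤ t) :
    Antitone fun k => Nstar a 1 (k + 1) t - Nstar a 1 k t :=
  antitone_nat_of_succ_le fun k => nstar_succ_succ_sub_le ht fun x hx =>
    (nval_succ_sub_nonneg_and_le ha0 ha1 ha k x hx.1).2

theorem nstar_succ_sub_le_nval_succ_sub (ha0 : a 0 = 0) (ha1 : 0 ≤ a 1)
    (ha : Antitone fun j => a (j + 1) - a j) {t : ℝ} (ht : 0 ≤ t) (m : ℕ) :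
    Nstar a 1 (m + 1) t - Nstar a 1 m t ≤ Nval a 1 (m + 1) t - Nval a 1 m t := by
  rcases Nat.eq_zero_or_pos m with rfl | hm
  · simpa only [zero_add, nval_one, nval_zero, nstar_zero, sub_zero] using nstar_one_le ha1 t
  · exact (isMaxConv_nval t).sub_le_sub hm ((antitone_nstar_succ_sub ha0 ha1 ha ht).antitoneOn _)

theorem monotoneOn_nstar_succ_sub (ha0 : a 0 = 0) (ha1 : 0 ≤ a 1)
    (ha : Antitone fun j => a (j + 1) - a j) (m : ℕ) :
    MonotoneOn (fun t => Nstar a 1 (m + 1) t - Nstar a 1 m t) (Ici 0) := by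
  refine monotoneOn_of_hasDerivWithinAt_nonneg (convex_Ici 0)
    ((continuous_nstar _).sub (continuous_nstar _)).continuousOn
    (fun t _ => ((hasDerivAt_nstar (m + 1) t).sub (hasDerivAt_nstar m t)).hasDerivWithinAt)
    fun t ht => ?_
  rw [interior_Ici] at ht
  linarith [nstar_succ_sub_le_nval_succ_sub ha0 ha1 ha (le_of_lt ht) m]

theorem monotoneOn_nstar_sub (ha0 : a 0 = 0) (ha1 : 0 ≤ a 1)
    (ha : Antitone fun j => a (j + 1) - a j) {p q : ℕ} (hpq : p ≤ q) :
    MonotoneOn (fun t => Nstar a 1 q t - Nstar a 1 p t) (Ici 0) := by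
  induction q, hpq using Nat.le_induction with
  | base => simpa only [sub_self] using monotoneOn_const
  | succ q _ ih =>
    intro x hx y hy hxy
    have hstep := monotoneOn_nstar_succ_sub ha0 ha1 ha q hx hy hxy
    have hrest := ih hx hy hxy
    simp only at hstep hrest ⊢
    linarith

theorem monotoneOn_nalloc_sub (ha0 : a 0 = 0) (ha1 : 0 ≤ a 1)
    (ha : Antitone fun j => a (j + 1) - a j) (n : ℕ) {k k' : ℕ} (hk : k ≤ k') :
    MonotoneOn (fun t => Nalloc a 1 n k t - Nalloc a 1 n k' t) (Ici 0) := by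
  have hgap := (monotoneOn_nstar_sub ha0 ha1 ha (Nat.sub_le_sub_left hk n)).const_add (a k - a k')
  convert hgap using 2 with t
  simp only [nalloc_one]
  ring

end InvincibleFighter

theorem invincible_A_general
    (a : ℕ → ℝ) (ha0 : a 0 = 0)
    (hmono : StrictMono a)
    (hconc : ∀ j : ℕ, a (j + 2) - a (j + 1) < a (j + 1) - a j) :
    ∀ n : ℕ, 1 ≤ n → AntitoneOn (fun t => Kopt a 1 n t) (Set.Ici (0:ℝ)) := by
  intro n hn
  have ha1 : 0 ≤ a 1 := ha0 ▸ (hmono zero_lt_one).le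
  have ha : Antitone fun j => a (j + 1) - a j := antitone_nat_of_succ_le fun j => (hconc j).le
  have hK := antitoneOn_sInf_argmax (S := Icc 1 n) (fun t _ => isGreatest_nval hn t)
    (fun k _ k' _ hk => monotoneOn_nalloc_sub ha0 ha1 ha n hk)
  simpa only [Kopt, mem_Icc, and_assoc] using hK

/-- Theorem 4.1 ([A] for the Invincible Fighter): for `u = 1` and every `n ≥ 1`,
`t ↦ K(n,t)` is non-increasing on `[0,∞)`. -/
theorem invincible_A
    (a : ℕ → ℝ) (haI : ∀ j, a j ∈ Set.Icc (0:ℝ) 1) (ha0 : a 0 = 0)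
    (hmono : StrictMono a)
    (hconc : ∀ j : ℕ, a (j + 2) - a (j + 1) < a (j + 1) - a j) :
    ∀ n : ℕ, 1 ≤ n → AntitoneOn (fun t => Kopt a 1 n t) (Set.Ici (0:ℝ)) :=
  invincible_A_general a ha0 hmono hconc
end
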